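/- Let E be a real separable Hilbert space, D ⊆ E open, F : D → E compact continuous, f(x) = x − F(x), U open and bounded with f⁻¹(0) ⊆ U ⊆ cl U ⊆ D, and suppose |f(x)| ≥ 2ε on ∂U for some ε > 0. With Pₙ the projections onto the spans of the first n vectors of an orthonormal basis and fₙ(x) = x − PₙF(x), there exists N such that |fₙ(x)| ≥ ε for all x ∈ ∂U and all n ≥ N. -/
import Mathlib


open Bornology RealInnerProductSpace Topology

open Filter

/-- Orthogonal projection onto the span of the first `n` vectors of the
orthonormal (Hilbert) basis `b`. -/
noncomputable def projN {E : Type*} [NormedAddCommGroup E] [InnerProductSpace ℝ E]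
    (b : HilbertBasis ℕ ℝ E) (n : ℕ) (x : E) : E :=
  ∑ i ∈ Finset.range n, ⟪b i, x⟫ • b i

lemma projN_sub {E : Type*} [NormedAddCommGroup E] [InnerProductSpace ℝ E]
    (b : HilbertBasis ℕ ℝ E) (n : ℕ) (x y : E) :
    projN b n (x - y) = projN b n x - projN b n y := by
  simp [projN, inner_sub_right, sub_smul, Finset.sum_sub_distrib]

lemma norm_projN_le {E : Type*} [NormedAddCommGroup E] [InnerProductSpace ℝ E]
    (b : HilbertBasis ℕ ℝ E) (n : ℕ) (x : E) : ‖projN b n x‖ ≤ ‖x‖ := by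
  rw [← pow_le_pow_iff_left₀ (norm_nonneg _) (norm_nonneg _) two_ne_zero]
  have h1 : ‖projN b n x‖ ^ 2 = ∑ i ∈ Finset.range n, ‖⟪b i, x⟫‖ ^ 2 := by
    rw [← real_inner_self_eq_norm_sq]
    rw [projN, b.orthonormal.inner_sum]
    simp [Real.norm_eq_abs, sq_abs, sq]
  rw [h1]
  exact b.orthonormal.sum_inner_products_le x

lemma tendsto_projN {E : Type*} [NormedAddCommGroup E] [InnerProductSpace ℝ E]
    [CompleteSpace E] (b : HilbertBasis ℕ ℝ E) (x : E) :
    Tendsto (fun n => projN b n x) atTop (nhds x) := by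
  have := (b.hasSum_repr x).tendsto_sum_nat
  simpa [projN, b.repr_apply_apply] using this

/-- If `‖f‖ ≥ 2ε` on `∂U`, then the finite-dimensional approximations satisfy
`‖fₙ‖ ≥ ε` on `∂U` for all large `n`. -/
theorem stmt12 {E : Type*} [NormedAddCommGroup E] [InnerProductSpace ℝ E]
    [CompleteSpace E] (b : HilbertBasis ℕ ℝ E)
    (D : Set E) (hD : IsOpen D)
    (F : E → E) (hFc : ContinuousOn F D)
    (hF : ∀ s ⊆ D, IsBounded s → IsCompact (closure (F '' s)))
    (U : Set E) (hU : IsOpen U) (hUb : IsBounded U)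
    (hzero : {x ∈ D | x - F x = 0} ⊆ U) (hclU : closure U ⊆ D)
    (ε : ℝ) (hε : 0 < ε)
    (hsep : ∀ x ∈ frontier U, 2 * ε ≤ ‖x - F x‖) :
    ∃ N : ℕ, ∀ n ≥ N, ∀ x ∈ frontier U, ε ≤ ‖x - projN b n (F x)‖ := by
  set K := closure (F '' closure U) with hK
  have hKc : IsCompact K := hF (closure U) hclU hUb.closure
  obtain ⟨t, ht⟩ := hKc.elim_finite_subcover (fun y : E => Metric.ball y (ε / 3))
    (fun y => Metric.isOpen_ball)
    (fun z hz => Set.mem_iUnion.2 ⟨z, Metric.mem_ball_self (by positivity)⟩)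
  have hev : ∀ᶠ n in Filter.atTop, ∀ y ∈ t, ‖projN b n y - y‖ < ε / 3 := by
    rw [Filter.eventually_all_finset]
    intro y _
    have h2 : Filter.Tendsto (fun n => ‖projN b n y - y‖) Filter.atTop (nhds 0) := by
      simpa using ((tendsto_projN b y).sub (tendsto_const_nhds (x := y))).norm
    exact h2.eventually_lt_const (by positivity)
  obtain ⟨N, hN⟩ := Filter.eventually_atTop.mp hev
  refine ⟨N, fun n hn x hx => ?_⟩
  have hxK : F x ∈ K := subset_closure ⟨x, frontier_subset_closure hx, rfl⟩
  obtain ⟨y, hyt, hy⟩ := Set.mem_iUnion₂.mp (ht hxK)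
  have hdist : ‖F x - y‖ < ε / 3 := by
    rw [← dist_eq_norm]; exact hy
  have h1 : ‖projN b n (F x) - F x‖ < ε := by
    have heq : projN b n (F x) - F x
        = projN b n (F x - y) + ((projN b n y - y) + (y - F x)) := by
      rw [projN_sub]; abel
    have tri : ‖projN b n (F x) - F x‖
        ≤ ‖projN b n (F x - y)‖ + (‖projN b n y - y‖ + ‖y - F x‖) := by
      rw [heq]; exact (norm_add_le _ _).trans (by gcongr; exact norm_add_le _ _)
    have hb1 : ‖projN b n (F x - y)‖ ≤ ‖F x - y‖ := norm_projN_le b n _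
    have hb2 : ‖projN b n y - y‖ < ε / 3 := hN n hn y hyt
    have hb3 : ‖y - F x‖ < ε / 3 := by rwa [norm_sub_rev]
    linarith
  have tri2 : ‖x - F x‖ ≤ ‖x - projN b n (F x)‖ + ‖projN b n (F x) - F x‖ := by
    have : x - F x = (x - projN b n (F x)) + (projN b n (F x) - F x) := by abel
    rw [this]; exact norm_add_le _ _
  have := hsep x hx
  linarith
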